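/- Suppose g : ℝ^n → ℝ^N is C¹, f : ℝ^n × ℝ^p → ℝ^n, U is convex with 0 ∈ U, and there exists a matrix A ∈ ℝ^{N×N} with g(f(x,0)) = A g(x) for all x (i.e. span of the components of g is invariant under the Koopman operator of the drift f(·,0) with matrix representation A). Define ℬ(x,u) = (∫₀¹ Dg(f(x,0)+λ(f(x,u)−f(x,0))) dλ)(f(x,u)−f(x,0)) and assume ℬ(x,·) is C¹ with ℬ(x,0)=0. Then for all x and u ∈ U, g(f(x,u)) = A g(x) + B̂(x,u) u, where B̂(x,u) = ∫₀¹ (∂ℬ/∂u)(x, λu) dλ. -/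

import Mathlib

/-!
Both integrals are fundamental-theorem-of-calculus integrals along segments: the one defining
`ℬ(x,u)` telescopes to `g(f(x,u)) - g(f(x,0)) = g(f(x,u)) - A g(x)`, and the one defining
`B̂(x,u) u` telescopes to `ℬ(x,u) - ℬ(x,0) = ℬ(x,u)`.
-/

open Matrix

theorem ContDiff.integral_fderiv_segment_eq_sub {E F : Type*}
    [NormedAddCommGroup E] [NormedSpace ℝ E]
    [NormedAddCommGroup F] [NormedSpace ℝ F] [CompleteSpace F]
    {h : E → F} (hh : ContDiff ℝ 1 h) (a b : E) :
    ∫ t in (0 : ℝ)..1, fderiv ℝ h (a + t • (b - a)) (b - a) = h b - h a := by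
  have hsegment : ∀ t : ℝ, HasDerivAt (fun t : ℝ => a + t • (b - a)) (b - a) t := fun t => by
    simpa using ((hasDerivAt_id t).smul_const (b - a)).const_add a
  have hderiv : ∀ t ∈ Set.uIcc (0 : ℝ) 1,
      HasDerivAt (fun t : ℝ => h (a + t • (b - a))) (fderiv ℝ h (a + t • (b - a)) (b - a)) t :=
    fun t _ => ((hh.differentiable one_ne_zero _).hasFDerivAt).comp_hasDerivAt t (hsegment t)
  have hcont : Continuous fun t : ℝ => fderiv ℝ h (a + t • (b - a)) (b - a) :=
    ((hh.continuous_fderiv one_ne_zero).comp (by fun_prop)).clm_apply continuous_const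
  simpa using intervalIntegral.integral_eq_sub_of_hasDerivAt hderiv (hcont.intervalIntegrable 0 1)

theorem koopman_form_general
    {n p N : ℕ} (U : Set (Fin p → ℝ))
    (g : (Fin n → ℝ) → (Fin N → ℝ)) (hg : ContDiff ℝ 1 g)
    (f : (Fin n → ℝ) → (Fin p → ℝ) → (Fin n → ℝ))
    (A : Matrix (Fin N) (Fin N) ℝ)
    (hA : ∀ x : Fin n → ℝ, g (f x 0) = A.mulVec (g x))
    (B : (Fin n → ℝ) → (Fin p → ℝ) → (Fin N → ℝ))
    (hB : ∀ x u, B x u =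
      ∫ l in (0:ℝ)..1,
        fderiv ℝ g (f x 0 + l • (f x u - f x 0)) (f x u - f x 0))
    (hBdiff : ∀ x, ContDiff ℝ 1 (B x))
    (hB0 : ∀ x, B x 0 = 0) :
    ∀ (x : Fin n → ℝ), ∀ u ∈ U,
      g (f x u) = A.mulVec (g x) + ∫ l in (0:ℝ)..1, fderiv ℝ (B x) (l • u) u := by
  intro x u _
  have hBx : B x u = g (f x u) - g (f x 0) :=
    (hB x u).trans (hg.integral_fderiv_segment_eq_sub _ _)
  have hB_hat : ∫ l in (0:ℝ)..1, fderiv ℝ (B x) (l • u) u = B x u := by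
    simpa [hB0] using (hBdiff x).integral_fderiv_segment_eq_sub 0 u
  rw [hB_hat, hBx, hA]
  abel

/-- Koopman form: if `g` is C¹, the span of the components of `g` is
invariant under the Koopman operator of the drift `f(·,0)` with matrix representation
`A` (i.e. `g(f(x,0)) = A g(x)`), `U` is convex with `0 ∈ U`, and
`ℬ(x,u) = (∫₀¹ Dg(f(x,0)+λ(f(x,u)−f(x,0))) dλ)(f(x,u)−f(x,0))` is C¹ in `u` with
`ℬ(x,0) = 0`, then `g(f(x,u)) = A g(x) + B̂(x,u) u` where
`B̂(x,u) u = ∫₀¹ (∂ℬ/∂u)(x,λu) u dλ`. -/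
theorem koopman_form
    {n p N : ℕ} (U : Set (Fin p → ℝ))
    (hUconv : Convex ℝ U) (hU0 : (0 : Fin p → ℝ) ∈ U)
    (g : (Fin n → ℝ) → (Fin N → ℝ)) (hg : ContDiff ℝ 1 g)
    (f : (Fin n → ℝ) → (Fin p → ℝ) → (Fin n → ℝ))
    (A : Matrix (Fin N) (Fin N) ℝ)
    (hA : ∀ x : Fin n → ℝ, g (f x 0) = A.mulVec (g x))
    (B : (Fin n → ℝ) → (Fin p → ℝ) → (Fin N → ℝ))
    (hB : ∀ x u, B x u =
      ∫ l in (0:ℝ)..1,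
        fderiv ℝ g (f x 0 + l • (f x u - f x 0)) (f x u - f x 0))
    (hBdiff : ∀ x, ContDiff ℝ 1 (B x))
    (hB0 : ∀ x, B x 0 = 0) :
    ∀ (x : Fin n → ℝ), ∀ u ∈ U,
      g (f x u) = A.mulVec (g x) + ∫ l in (0:ℝ)..1, fderiv ℝ (B x) (l • u) u :=
  koopman_form_general U g hg f A hA B hB hBdiff hB0
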